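/- Assume the family (r_j)_{j∈ℤ³} is independent, each with law ν, and that S := Σ_{k ∈ ℤ³, k ≠ 0} ‖ν‖_{L^∞(W + B_η − k)} < ∞ for some η > 0. Then for every j ∈ ℤ³ and every 0 < ε < η one has: (i) if j = 0, P(r₀ ∈ W and δ₀ < ε) ≤ (4π/3)·S·ν(W)·ε³; (ii) if j ≠ 0, P(r₀ ∈ W − j and δ₀ < ε) ≤ (4π/3)·(S + 1)·‖ν‖_{L^∞(W − j)}·ε³. -/

import Mathlib

open MeasureTheory ProbabilityTheory ENNReal Pointwise

noncomputable section

/-- `ℝ³` with the Euclidean norm. -/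
abbrev E3 := EuclideanSpace ℝ (Fin 3)

/-- The lattice point `j ∈ ℤ³` viewed in `ℝ³`. -/
def latt (j : Fin 3 → ℤ) : E3 := (EuclideanSpace.equiv (Fin 3) ℝ).symm (fun i => (j i : ℝ))

/-- The semi-open unit cube `W = [-1/2, 1/2)³`. -/
def Wcube : Set E3 := {x | ∀ i, -(1:ℝ)/2 ≤ x i ∧ x i < 1/2}

/-- `δ₀(ω) = inf_{k ≠ 0} |r₀(ω) − k − r_k(ω)|`, with values in `[0,∞]`. -/
def delta0 {Ω : Type*} (r : (Fin 3 → ℤ) → Ω → E3) (ω : Ω) : ℝ≥0∞ :=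
  ⨅ k : {k : Fin 3 → ℤ // k ≠ 0},
    edist (r 0 ω) (latt (k : Fin 3 → ℤ) + r (k : Fin 3 → ℤ) ω)

/-- `‖ν‖_{L^∞(A)}`: the least `M ∈ [0,∞]` such that `ν(B) ≤ M·λ(B)` for every Borel `B ⊆ A`. -/
def densBound (ν : Measure E3) (A : Set E3) : ℝ≥0∞ :=
  sInf {M : ℝ≥0∞ | ∀ B : Set E3, B ⊆ A → MeasurableSet B → ν B ≤ M * volume B}

/-! On the event `{r₀ ∈ A, δ₀ < ε}` some `k ≠ 0` has `|r₀ − k − r_k| < ε`, and `(r₀, r_k)` has law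
`ν ⊗ ν`, so a union bound reduces everything to the `ν ⊗ ν`-measure of
`{(x, y) : x ∈ A, |x − k − y| < ε}`. For `A = W − j`, integrating first in `y` bounds it by
`‖ν‖_{L^∞(W + B_η − (j + k))} · |B_ε| · ν(A)`, since `B(x − k, ε) ⊆ W + B_η − (j + k)`; these are
the terms of `S`, except for `k = −j`, where one integrates in `x` instead and gets
`‖ν‖_{L^∞(A)} · |B_ε|`. -/

open Metric

lemma volume_ball_E3 (x : E3) {ε : ℝ} (hε : 0 ≤ ε) :
    volume (ball x ε) = ENNReal.ofReal (4 * Real.pi / 3) * ENNReal.ofReal (ε ^ 3) := by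
  rw [EuclideanSpace.volume_ball_fin_three, ← ENNReal.ofReal_pow hε, mul_comm]
  ring_nf

lemma measurableSet_Wcube : MeasurableSet Wcube := by
  have : Wcube = ⋂ i, (fun x : E3 => x i) ⁻¹' Set.Ico (-(1:ℝ)/2) (1/2) := by
    ext x; simp [Wcube, Set.mem_Ico]
  rw [this]
  exact MeasurableSet.iInter fun i =>
    ((measurable_pi_apply i).comp (WithLp.measurable_ofLp 2 (Fin 3 → ℝ))) measurableSet_Ico

lemma volume_Wcube : volume Wcube = 1 := by
  have h : Wcube = (MeasurableEquiv.toLp 2 (Fin 3 → ℝ)).symm ⁻¹'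
      (Set.pi Set.univ fun _ => Set.Ico (-(1:ℝ)/2) (1/2)) := by
    ext x; simp [Wcube, MeasurableEquiv.coe_toLp_symm, Set.mem_Ico]
  rw [h, (EuclideanSpace.volume_preserving_symm_measurableEquiv_toLp (Fin 3)).measure_preimage
    (MeasurableSet.univ_pi fun _ => measurableSet_Ico).nullMeasurableSet, volume_pi_pi]
  norm_num

lemma measurableSet_Wcube_shift (j : Fin 3 → ℤ) :
    MeasurableSet ((fun x => x + latt j) ⁻¹' Wcube) :=
  measurableSet_Wcube.preimage (measurable_add_const _)

lemma latt_add (j k : Fin 3 → ℤ) : latt (j + k) = latt j + latt k := by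
  simp only [latt, ← map_add]
  congr 1
  ext i
  simp

lemma measure_le_densBound_mul {ν : Measure E3} {A B : Set E3} (hA : densBound ν A ≠ ⊤)
    (hBA : B ⊆ A) (hB : MeasurableSet B) (hvol : volume B ≠ ⊤) :
    ν B ≤ densBound ν A * volume B := by
  set T := {M : ℝ≥0∞ | ∀ B : Set E3, B ⊆ A → MeasurableSet B → ν B ≤ M * volume B}
  have hT : T.Nonempty := by
    by_contra h
    exact hA (show sInf T = ⊤ by rw [Set.not_nonempty_iff_eq_empty.mp h, sInf_empty])
  have := hT.to_subtype
  calc ν B ≤ ⨅ M : T, (M : ℝ≥0∞) * volume B := le_iInf fun M => M.2 B hBA hB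
    _ = densBound ν A * volume B := by
      rw [densBound, sInf_eq_iInf', ENNReal.iInf_mul (by simp [hvol])]

section closePairs

variable {E : Type*} [SeminormedAddCommGroup E]

def closePairs (A : Set E) (v : E) (ε : ℝ) : Set (E × E) :=
  {p | p.1 ∈ A ∧ dist p.1 (v + p.2) < ε}

variable {A : Set E} {v : E} {ε : ℝ}

lemma dist_add_eq_dist_sub (v x y : E) : dist x (v + y) = dist y (x - v) := by
  rw [dist_comm, dist_eq_norm, dist_eq_norm, sub_sub_eq_add_sub, add_comm v]

lemma preimage_prodMk_closePairs_of_mem {x : E} (hx : x ∈ A) :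
    Prod.mk x ⁻¹' closePairs A v ε = ball (x - v) ε := by
  ext y
  simp [closePairs, hx, dist_add_eq_dist_sub]

lemma preimage_prodMk_closePairs_of_notMem {x : E} (hx : x ∉ A) :
    Prod.mk x ⁻¹' closePairs A v ε = ∅ := by
  ext y
  simp [closePairs, hx]

lemma measurableSet_closePairs [MeasurableSpace E] [BorelSpace E] [SecondCountableTopology E]
    (hA : MeasurableSet A) : MeasurableSet (closePairs A v ε) := by
  have hdist : Continuous fun p : E × E => dist p.1 (v + p.2) := by fun_prop
  exact (measurable_fst hA).inter (measurableSet_lt hdist.measurable measurable_const)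

lemma ball_sub_subset_preimage_add_ball {x : E} (hx : x ∈ A) {η : ℝ} (hεη : ε ≤ η) :
    ball (x - v) ε ⊆ (· + v) ⁻¹' (A + ball 0 η) := by
  intro y hy
  refine ⟨x, hx, y + v - x, ?_, add_sub_cancel x (y + v)⟩
  rw [mem_ball_zero_iff, ← sub_sub_eq_add_sub, ← dist_eq_norm]
  exact (mem_ball.mp hy).trans_le hεη

end closePairs

lemma map_prodMk_eq_prod_of_iIndepFun {ι β Ω : Type*} [MeasurableSpace β] [MeasurableSpace Ω]
    {P : Measure Ω} [IsFiniteMeasure P] {r : ι → Ω → β} (hmeas : ∀ i, Measurable (r i))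
    (hindep : iIndepFun r P) {μ : Measure β} (hlaw : ∀ i, P.map (r i) = μ) {i j : ι}
    (hij : i ≠ j) :
    P.map (fun ω => (r i ω, r j ω)) = μ.prod μ := by
  rw [(indepFun_iff_map_prod_eq_prod_map_map (hmeas i).aemeasurable
    (hmeas j).aemeasurable).mp (hindep.indepFun hij), hlaw, hlaw]

lemma tsum_ne_zero_ite_add_le {G : Type*} [AddLeftCancelMonoid G] [DecidableEq G]
    (F : G → ℝ≥0∞) (c : ℝ≥0∞) (j : G) :
    ∑' k : {k : G // k ≠ 0}, (if j + (k : G) = 0 then c else F (j + k))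
      ≤ c + ∑' m : {m : G // m ≠ 0}, F m := by
  set H : G → ℝ≥0∞ := fun m => if m = 0 then c else F m
  have hshift : Function.Injective fun k : {k : G // k ≠ 0} => j + (k : G) :=
    fun a b hab => Subtype.ext (add_left_cancel hab)
  calc ∑' k : {k : G // k ≠ 0}, H (j + k) ≤ ∑' m, H m :=
        ENNReal.tsum_comp_le_tsum_of_injective hshift H
    _ = c + ∑' m, if m = 0 then 0 else F m := by
      rw [ENNReal.tsum_eq_add_tsum_ite 0]
      refine congrArg₂ (· + ·) (if_pos rfl) (tsum_congr fun m => ?_)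
      by_cases hm : m = 0 <;> simp [H, hm]
    _ = c + ∑' m : {m : G // m ≠ 0}, F m := by
      refine congrArg (c + ·) ((tsum_subtype {m : G | m ≠ 0} F).trans (tsum_congr fun m => ?_)).symm
      by_cases hm : m = 0 <;> simp [hm]

section

variable {ν : Measure E3}

lemma prod_closePairs_le_densBound_mul_measure [SFinite ν] {A T : Set E3} (hA : MeasurableSet A)
    (hT : densBound ν T ≠ ⊤) {v : E3} {ε : ℝ} (hball : ∀ x ∈ A, ball (x - v) ε ⊆ T) :
    (ν.prod ν) (closePairs A v ε) ≤ densBound ν T * volume (ball (0 : E3) ε) * ν A := by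
  have hsection : ∀ x, ν (Prod.mk x ⁻¹' closePairs A v ε)
      ≤ A.indicator (fun _ => densBound ν T * volume (ball (0 : E3) ε)) x := by
    intro x
    by_cases hx : x ∈ A
    · rw [Set.indicator_of_mem hx, preimage_prodMk_closePairs_of_mem hx,
        ← Measure.addHaar_ball_center volume (x - v)]
      exact measure_le_densBound_mul hT (hball x hx) measurableSet_ball measure_ball_lt_top.ne
    · simp [Set.indicator_of_notMem hx, preimage_prodMk_closePairs_of_notMem hx]
  rw [Measure.prod_apply (measurableSet_closePairs hA), ← lintegral_indicator_const hA]
  exact lintegral_mono hsection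

lemma prod_closePairs_le_densBound_mul [IsProbabilityMeasure ν] {A : Set E3}
    (hA : MeasurableSet A) (hAfin : densBound ν A ≠ ⊤) (v : E3) (ε : ℝ) :
    (ν.prod ν) (closePairs A v ε) ≤ densBound ν A * volume (ball (0 : E3) ε) := by
  have hsection : ∀ y, ν ((fun x => (x, y)) ⁻¹' closePairs A v ε)
      ≤ densBound ν A * volume (ball (0 : E3) ε) := by
    intro y
    rw [← Measure.addHaar_ball_center volume (v + y)]
    calc ν (A ∩ ball (v + y) ε) ≤ densBound ν A * volume (A ∩ ball (v + y) ε) :=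
          measure_le_densBound_mul hAfin Set.inter_subset_left (hA.inter measurableSet_ball)
            ((measure_mono Set.inter_subset_right).trans_lt measure_ball_lt_top).ne
      _ ≤ densBound ν A * volume (ball (v + y) ε) := by gcongr; exact Set.inter_subset_right
  rw [Measure.prod_apply_symm (measurableSet_closePairs hA)]
  exact (lintegral_mono hsection).trans_eq (by simp)

lemma measure_delta0_lt_le_tsum {Ω : Type*} [MeasurableSpace Ω] {P : Measure Ω}
    [IsFiniteMeasure P] {r : (Fin 3 → ℤ) → Ω → E3} (hmeas : ∀ j, Measurable (r j))
    (hindep : iIndepFun r P) (hlaw : ∀ j, P.map (r j) = ν) {A : Set E3} (hA : MeasurableSet A)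
    (ε : ℝ) :
    P {ω | r 0 ω ∈ A ∧ delta0 r ω < ENNReal.ofReal ε}
      ≤ ∑' k : {k : Fin 3 → ℤ // k ≠ 0}, (ν.prod ν) (closePairs A (latt k) ε) := by
  have hcover : {ω | r 0 ω ∈ A ∧ delta0 r ω < ENNReal.ofReal ε}
      ⊆ ⋃ k : {k : Fin 3 → ℤ // k ≠ 0},
          (fun ω => (r 0 ω, r k ω)) ⁻¹' closePairs A (latt k) ε := by
    rintro ω ⟨hA, hδ⟩
    obtain ⟨k, hk⟩ := iInf_lt_iff.mp hδ
    exact Set.mem_iUnion.mpr ⟨k, hA, edist_lt_ofReal.mp hk⟩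
  refine (measure_mono hcover).trans <| (measure_iUnion_le _).trans <|
    ENNReal.tsum_le_tsum fun k => ?_
  rw [← Measure.map_apply ((hmeas 0).prodMk (hmeas k)) (measurableSet_closePairs hA),
    map_prodMk_eq_prod_of_iIndepFun hmeas hindep hlaw k.2.symm]

/-- `‖ν‖_{L^∞(W + B_η − m)}`, the `m`-th term of the sum `S`. -/
def cubeNbhdDensBound (ν : Measure E3) (η : ℝ) (m : Fin 3 → ℤ) : ℝ≥0∞ :=
  densBound ν ((fun x => x + latt m) ⁻¹' (Wcube + ball (0 : E3) η))

variable {ε η : ℝ}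

lemma ball_sub_subset_cubeNbhd {j : Fin 3 → ℤ} {x : E3} (hx : x + latt j ∈ Wcube)
    (k : Fin 3 → ℤ) (hεη : ε ≤ η) :
    ball (x - latt k) ε ⊆ (fun z => z + latt (j + k)) ⁻¹' (Wcube + ball (0 : E3) η) := by
  have hcenter : x + latt j - latt (j + k) = x - latt k := by rw [latt_add]; abel
  simpa only [hcenter] using ball_sub_subset_preimage_add_ball (v := latt (j + k)) hx hεη

lemma tsum_prod_closePairs_Wcube_le [SFinite ν] (hεη : ε ≤ η)
    (hS : ∑' k : {k : Fin 3 → ℤ // k ≠ 0}, cubeNbhdDensBound ν η k ≠ ⊤) :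
    ∑' k : {k : Fin 3 → ℤ // k ≠ 0}, (ν.prod ν) (closePairs Wcube (latt k) ε)
      ≤ (∑' k : {k : Fin 3 → ℤ // k ≠ 0}, cubeNbhdDensBound ν η k)
          * volume (ball (0 : E3) ε) * ν Wcube := by
  rw [← ENNReal.tsum_mul_right, ← ENNReal.tsum_mul_right]
  refine ENNReal.tsum_le_tsum fun k => prod_closePairs_le_densBound_mul_measure measurableSet_Wcube
    (ne_top_of_le_ne_top hS (ENNReal.le_tsum k))
    fun x hx => ball_sub_subset_preimage_add_ball hx hεη

lemma tsum_prod_closePairs_shiftedCube_le [IsProbabilityMeasure ν] (j : Fin 3 → ℤ)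
    (hεη : ε ≤ η) (hS : ∑' k : {k : Fin 3 → ℤ // k ≠ 0}, cubeNbhdDensBound ν η k ≠ ⊤)
    (hj : densBound ν ((fun x => x + latt j) ⁻¹' Wcube) ≠ ⊤) :
    ∑' k : {k : Fin 3 → ℤ // k ≠ 0},
        (ν.prod ν) (closePairs ((fun x => x + latt j) ⁻¹' Wcube) (latt k) ε)
      ≤ (∑' k : {k : Fin 3 → ℤ // k ≠ 0}, cubeNbhdDensBound ν η k + 1)
          * volume (ball (0 : E3) ε) * densBound ν ((fun x => x + latt j) ⁻¹' Wcube) := by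
  set A := (fun x => x + latt j) ⁻¹' Wcube
  have hA : MeasurableSet A := measurableSet_Wcube_shift j
  have hvol : volume A = 1 := by rw [measure_preimage_add_right, volume_Wcube]
  have hνA : ν A ≤ densBound ν A := by
    simpa [hvol] using measure_le_densBound_mul hj subset_rfl hA (by simp [hvol])
  have hterm : ∀ k : {k : Fin 3 → ℤ // k ≠ 0}, (ν.prod ν) (closePairs A (latt k) ε)
      ≤ (if j + (k : Fin 3 → ℤ) = 0 then 1 else cubeNbhdDensBound ν η (j + k))
          * (volume (ball (0 : E3) ε) * densBound ν A) := by
    intro k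
    split_ifs with hjk
    · rw [one_mul, mul_comm]
      exact prod_closePairs_le_densBound_mul hA hj _ ε
    · calc (ν.prod ν) (closePairs A (latt k) ε)
            ≤ cubeNbhdDensBound ν η (j + k) * volume (ball (0 : E3) ε) * ν A :=
          prod_closePairs_le_densBound_mul_measure hA
            (ne_top_of_le_ne_top hS (ENNReal.le_tsum (⟨j + k, hjk⟩ : {k : Fin 3 → ℤ // k ≠ 0})))
            fun x hx => ball_sub_subset_cubeNbhd hx k hεη
        _ ≤ _ := by rw [mul_assoc]; gcongr
  calc _ ≤ _ := ENNReal.tsum_le_tsum hterm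
    _ = _ := ENNReal.tsum_mul_right
    _ ≤ (1 + ∑' m : {m : Fin 3 → ℤ // m ≠ 0}, cubeNbhdDensBound ν η m)
          * (volume (ball (0 : E3) ε) * densBound ν A) := by
      gcongr
      exact tsum_ne_zero_ite_add_le _ 1 j
    _ = _ := by ring

end

theorem prob_small_delta0_bound_general
    (ν : Measure E3) [IsProbabilityMeasure ν]
    {Ω : Type*} [MeasurableSpace Ω] (P : Measure Ω) [IsProbabilityMeasure P]
    (r : (Fin 3 → ℤ) → Ω → E3) (hmeas : ∀ j, Measurable (r j))
    (hindep : iIndepFun r P)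
    (hlaw : ∀ j, P.map (r j) = ν)
    (η : ℝ)
    (S : ℝ≥0∞)
    (hS : S = ∑' k : {k : Fin 3 → ℤ // k ≠ 0},
        densBound ν ((fun x => x + latt (k : Fin 3 → ℤ)) ⁻¹' (Wcube + Metric.ball (0 : E3) η)))
    (hSfin : S < ⊤)
    (j : Fin 3 → ℤ) (ε : ℝ) (hε : 0 < ε) (hεη : ε < η) :
    (j = 0 →
      P {ω | r 0 ω ∈ Wcube ∧ delta0 r ω < ENNReal.ofReal ε}
        ≤ ENNReal.ofReal (4 * Real.pi / 3) * S * ν Wcube * ENNReal.ofReal (ε ^ 3)) ∧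
    (j ≠ 0 →
      P {ω | r 0 ω + latt j ∈ Wcube ∧ delta0 r ω < ENNReal.ofReal ε}
        ≤ ENNReal.ofReal (4 * Real.pi / 3) * (S + 1)
            * densBound ν ((fun x => x + latt j) ⁻¹' Wcube) * ENNReal.ofReal (ε ^ 3)) := by
  have hS' : ∑' k : {k : Fin 3 → ℤ // k ≠ 0}, cubeNbhdDensBound ν η k = S := hS.symm
  have hball := volume_ball_E3 (0 : E3) hε.le
  refine ⟨fun _ => ?_, fun _ => ?_⟩
  · calc P _ ≤ _ := measure_delta0_lt_le_tsum hmeas hindep hlaw measurableSet_Wcube ε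
      _ ≤ S * volume (ball (0 : E3) ε) * ν Wcube :=
        hS' ▸ tsum_prod_closePairs_Wcube_le hεη.le (hS' ▸ hSfin.ne)
      _ = _ := by rw [hball]; ring
  · by_cases hj : densBound ν ((fun x => x + latt j) ⁻¹' Wcube) = ⊤
    · rw [hj, ENNReal.mul_top (by positivity), ENNReal.top_mul (by positivity)]
      exact le_top
    calc P {ω | r 0 ω ∈ (fun x => x + latt j) ⁻¹' Wcube ∧ delta0 r ω < ENNReal.ofReal ε}
        ≤ _ := measure_delta0_lt_le_tsum hmeas hindep hlaw (measurableSet_Wcube_shift j) ε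
      _ ≤ (S + 1) * volume (ball (0 : E3) ε) * densBound ν ((fun x => x + latt j) ⁻¹' Wcube) :=
        hS' ▸ tsum_prod_closePairs_shiftedCube_le j hεη.le (hS' ▸ hSfin.ne) hj
      _ = _ := by rw [hball]; ring

/-- If the `r_j` are independent with common law `ν` and
`S = Σ_{k ≠ 0} ‖ν‖_{L^∞(W + B_η − k)} < ∞` for some `η > 0`, then for every `j ∈ ℤ³` and
every `0 < ε < η`:
(i) if `j = 0`, `P(r₀ ∈ W and δ₀ < ε) ≤ (4π/3)·S·ν(W)·ε³`;
(ii) if `j ≠ 0`, `P(r₀ ∈ W − j and δ₀ < ε) ≤ (4π/3)·(S+1)·‖ν‖_{L^∞(W−j)}·ε³`. -/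
theorem prob_small_delta0_bound
    (ν : Measure E3) [IsProbabilityMeasure ν]
    {Ω : Type*} [MeasurableSpace Ω] (P : Measure Ω) [IsProbabilityMeasure P]
    (r : (Fin 3 → ℤ) → Ω → E3) (hmeas : ∀ j, Measurable (r j))
    (hindep : iIndepFun r P)
    (hlaw : ∀ j, P.map (r j) = ν)
    (η : ℝ) (hη : 0 < η)
    (S : ℝ≥0∞)
    (hS : S = ∑' k : {k : Fin 3 → ℤ // k ≠ 0},
        densBound ν ((fun x => x + latt (k : Fin 3 → ℤ)) ⁻¹' (Wcube + Metric.ball (0 : E3) η)))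
    (hSfin : S < ⊤)
    (j : Fin 3 → ℤ) (ε : ℝ) (hε : 0 < ε) (hεη : ε < η) :
    (j = 0 →
      P {ω | r 0 ω ∈ Wcube ∧ delta0 r ω < ENNReal.ofReal ε}
        ≤ ENNReal.ofReal (4 * Real.pi / 3) * S * ν Wcube * ENNReal.ofReal (ε ^ 3)) ∧
    (j ≠ 0 →
      P {ω | r 0 ω + latt j ∈ Wcube ∧ delta0 r ω < ENNReal.ofReal ε}
        ≤ ENNReal.ofReal (4 * Real.pi / 3) * (S + 1)
            * densBound ν ((fun x => x + latt j) ⁻¹' Wcube) * ENNReal.ofReal (ε ^ 3)) :=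
  prob_small_delta0_bound_general ν P r hmeas hindep hlaw η S hS hSfin j ε hε hεη
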